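/- arXiv:0706.3861 — 4 statements merged into one kernel-verified Lean document; each statement's English description precedes it below -/
import Mathlib

section
/- If X is a finite-dimensional real normed space and G is a group of linear isomorphisms which is the group of isometries of X in some equivalent norm, and G is countable, then G is finite. -/
/-- if `X` is a finite-dimensional real normed space and a countable
group `G` of linear isomorphisms is the group of all surjective linear isometries
of `X` in some equivalent norm `N`, then `G` is finite. -/
theorem stmt_6 (X : Type*) [NormedAddCommGroup X] [NormedSpace ℝ X]
    [FiniteDimensional ℝ X]
    (G : Subgroup (X ≃L[ℝ] X)) (hcount : Countable G)
    (N : X → ℝ) (c C : ℝ) (hc : 0 < c) (hC : 0 < C)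
    (hlow : ∀ x, c * ‖x‖ ≤ N x) (hup : ∀ x, N x ≤ C * ‖x‖)
    (htri : ∀ x y, N (x + y) ≤ N x + N y)
    (hhom : ∀ (r : ℝ) (x : X), N (r • x) = |r| * N x)
    (hG : (G : Set (X ≃L[ℝ] X)) = {T : X ≃L[ℝ] X | ∀ x, N (T x) = N x}) :
    Finite G := by
  classical
  -- basic properties of N
  have hN0 : N 0 = 0 := by
    have := hhom 0 0
    simpa using this
  have hmemG : ∀ T : X ≃L[ℝ] X, T ∈ G ↔ ∀ x, N (T x) = N x := by
    intro T
    constructor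
    · intro hT
      have : T ∈ (G : Set (X ≃L[ℝ] X)) := hT
      rw [hG] at this
      exact this
    · intro h
      have : T ∈ ({T : X ≃L[ℝ] X | ∀ x, N (T x) = N x} : Set (X ≃L[ℝ] X)) := h
      rw [← hG] at this
      exact this
  -- continuity of N
  have hNsub : ∀ x y : X, N x - N y ≤ C * ‖x - y‖ := by
    intro x y
    have h1 : N x ≤ N (x - y) + N y := by
      have := htri (x - y) y
      simpa using this
    have h2 : N (x - y) ≤ C * ‖x - y‖ := hup _
    linarith
  have hNcont : Continuous N := by
    have hlip : LipschitzWith (Real.toNNReal C) N := by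
      apply LipschitzWith.of_dist_le_mul
      intro x y
      rw [Real.dist_eq, dist_eq_norm, Real.coe_toNNReal C hC.le]
      rw [abs_sub_le_iff]
      refine ⟨hNsub x y, ?_⟩
      rw [norm_sub_rev]
      exact hNsub y x
    exact hlip.continuous
  -- the set of N-isometric continuous linear maps
  set S : Set (X →L[ℝ] X) := {T : X →L[ℝ] X | ∀ x, N (T x) = N x} with hSdef
  -- S is closed
  have hSclosed : IsClosed S := by
    have : S = ⋂ x : X, {T : X →L[ℝ] X | N (T x) = N x} := by
      ext T; simp [hSdef]
    rw [this]
    refine isClosed_iInter fun x => isClosed_eq ?_ continuous_const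
    exact hNcont.comp (ContinuousLinearMap.apply ℝ X x).continuous
  -- every element of S comes from G
  have hS_of : ∀ T : X →L[ℝ] X, T ∈ S → ∃ g : X ≃L[ℝ] X, g ∈ G ∧ (g : X →L[ℝ] X) = T := by
    intro T hT
    have hinj : Function.Injective T := by
      intro a b hab
      have h0 : T (a - b) = 0 := by simp [map_sub, hab]
      have : N (a - b) = 0 := by rw [← hT (a - b), h0, hN0]
      have hle := hlow (a - b)
      rw [this] at hle
      have : ‖a - b‖ = 0 := le_antisymm (by nlinarith [norm_nonneg (a - b)]) (norm_nonneg _)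
      have := norm_eq_zero.mp this
      exact sub_eq_zero.mp this
    have hinj' : Function.Injective (T : X →ₗ[ℝ] X) := hinj
    have hsurj : Function.Surjective (T : X →ₗ[ℝ] X) :=
      (LinearMap.injective_iff_surjective).mp hinj'
    let e : X ≃ₗ[ℝ] X := LinearEquiv.ofBijective (T : X →ₗ[ℝ] X) ⟨hinj', hsurj⟩
    let g : X ≃L[ℝ] X := e.toContinuousLinearEquiv
    have hge : ∀ x, g x = T x := fun x => rfl
    refine ⟨g, ?_, by ext x; exact hge x⟩
    rw [hmemG]
    intro x
    rw [hge]
    exact hT x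
  -- S is the image of G
  have hSeq : S = (fun g : X ≃L[ℝ] X => (g : X →L[ℝ] X)) '' (G : Set (X ≃L[ℝ] X)) := by
    ext T
    constructor
    · intro hT
      obtain ⟨g, hg, hgT⟩ := hS_of T hT
      exact ⟨g, hg, hgT⟩
    · rintro ⟨g, hg, rfl⟩
      intro x
      exact (hmemG g).mp hg x
  -- S is countable
  have hGcount : (G : Set (X ≃L[ℝ] X)).Countable := Set.countable_coe_iff.mp hcount
  have hScount : S.Countable := by rw [hSeq]; exact hGcount.image _
  -- S is compact
  have hSbdd : Bornology.IsBounded S := by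
    have hsub : S ⊆ Metric.closedBall 0 (C / c) := by
      intro T hT
      rw [Metric.mem_closedBall, dist_zero_right]
      refine ContinuousLinearMap.opNorm_le_bound T (by positivity) fun x => ?_
      have h1 : c * ‖T x‖ ≤ N (T x) := hlow _
      have h2 : N (T x) = N x := hT x
      have h3 : N x ≤ C * ‖x‖ := hup _
      rw [div_mul_eq_mul_div, le_div_iff₀ hc]
      nlinarith
    exact Bornology.IsBounded.subset (Metric.isBounded_closedBall) hsub
  have hScomp : IsCompact S := Metric.isCompact_of_isClosed_isBounded hSclosed hSbdd
  -- suppose G is infinite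
  by_contra hfin
  have hGinf : (G : Set (X ≃L[ℝ] X)).Infinite := by
    intro hGf
    exact hfin hGf.to_subtype
  have hSinf : S.Infinite := by
    rw [hSeq]
    exact Set.Infinite.image (Set.injOn_of_injective ContinuousLinearEquiv.coe_injective) hGinf
  -- get an accumulation point in S
  obtain ⟨T₀, hT₀S, hT₀acc⟩ := hSinf.exists_accPt_of_subset_isCompact hScomp Set.Subset.rfl
  obtain ⟨A, hA, hAT₀⟩ := hS_of T₀ hT₀S
  -- homogeneity: every point of S is an accumulation point
  have hpre : Preperfect S := by
    intro T₁ hT₁S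
    obtain ⟨B, hB, hBT₁⟩ := hS_of T₁ hT₁S
    set M : X ≃L[ℝ] X := B * A⁻¹ with hMdef
    have hM : M ∈ G := mul_mem hB (inv_mem hA)
    have hMiso : ∀ x, N (M x) = N x := (hmemG M).mp hM
    set f : (X →L[ℝ] X) → (X →L[ℝ] X) := fun T => (M : X →L[ℝ] X).comp T with hfdef
    have hfcont : Continuous f := (ContinuousLinearMap.compL ℝ X X X (M : X →L[ℝ] X)).continuous
    have hfinj : Function.Injective f := by
      intro T T' h
      ext x
      have : M (T x) = M (T' x) := by
        have := congrArg (fun g : X →L[ℝ] X => g x) h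
        simpa [hfdef] using this
      exact M.injective this
    have hfS : ∀ T ∈ S, f T ∈ S := by
      intro T hT x
      simp only [hfdef, ContinuousLinearMap.comp_apply, ContinuousLinearEquiv.coe_coe]
      rw [hMiso, hT]
    have hfT₀ : f T₀ = T₁ := by
      ext x
      simp only [hfdef, ContinuousLinearMap.comp_apply, ContinuousLinearEquiv.coe_coe]
      rw [← hAT₀, ← hBT₁]
      show B (A.symm (A x)) = B x
      rw [A.symm_apply_apply]
    rw [accPt_iff_nhds] at hT₀acc ⊢
    intro U hU
    have hU' : f ⁻¹' U ∈ nhds T₀ := by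
      have : Filter.Tendsto f (nhds T₀) (nhds T₁) := by
        rw [← hfT₀]; exact hfcont.continuousAt
      exact this hU
    obtain ⟨z, ⟨hzU, hzS⟩, hzne⟩ := hT₀acc (f ⁻¹' U) hU'
    refine ⟨f z, ⟨hzU, hfS z hzS⟩, fun h => hzne ?_⟩
    rw [← hfT₀] at h
    exact hfinj h
  -- perfect nonempty set in complete space: uncountable
  have hPerf : Perfect S := ⟨hSclosed, hpre⟩
  obtain ⟨φ, hrange, -, hφinj⟩ := hPerf.exists_nat_bool_injection ⟨T₀, hT₀S⟩
  have hrc : (Set.range φ).Countable := hScount.mono hrange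
  have : Countable (ℕ → Bool) := by
    have := hrc.to_subtype
    exact Function.Injective.countable
      (f := fun b : (ℕ → Bool) => (⟨φ b, Set.mem_range_self b⟩ : Set.range φ))
      (fun a b h => hφinj (congrArg Subtype.val h))
  have hsetN : Countable (Set ℕ) := by
    have e : (ℕ → Bool) ≃ Set ℕ :=
      Equiv.arrowCongr (Equiv.refl ℕ) Equiv.propEquivBool.symm
    exact Countable.of_equiv _ e
  obtain ⟨f, hf⟩ := exists_injective_nat (Set ℕ)
  exact Function.cantor_injective f hf
end

section
/- Let X be a real Banach space, A and B operators with A² = B² = −Id and AB = BA. If the complex Banach space X^A is isomorphic (ℂ-linearly) to its conjugate X^{−A} and X^A is primary, then X^A and X^B are ℂ-linearly isomorphic. -/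
set_option synthInstance.maxHeartbeats 1000000
set_option maxHeartbeats 1000000


/-- A complex structure on a real Banach space `X` given by an operator `A` with
`A² = -Id` is *primary* if for every continuous projection `P` commuting with `A`
(i.e. every `ℂ`-linear direct sum decomposition of `X^A`), the space `X^A` is
`ℂ`-linearly isomorphic either to the range of `P` or to the range of `1 - P`;
a `ℂ`-linear isomorphism from `X^A` onto the range of a projection `R` commuting
with `A` is encoded by a pair of operators `T, S` commuting with `A` such that
`S ∘ T = Id` and `T ∘ S = R`. -/
def IsPrimaryStructure {X : Type*} [NormedAddCommGroup X] [NormedSpace ℝ X]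
    (A : X →L[ℝ] X) : Prop :=
  ∀ P : X →L[ℝ] X, P * P = P → P * A = A * P →
    (∃ T S : X →L[ℝ] X, T * A = A * T ∧ S * A = A * S ∧ S * T = 1 ∧ T * S = P) ∨
    (∃ T S : X →L[ℝ] X, T * A = A * T ∧ S * A = A * S ∧ S * T = 1 ∧ T * S = 1 - P)

/-- let `A, B` be commuting operators on a real Banach space `X` with
`A² = B² = -Id`. If the complex space `X^A` is `ℂ`-linearly isomorphic to its
conjugate `X^{-A}` (encoded by an invertible operator `C` with `CA = -AC`) and
`X^A` is primary, then `X^A` and `X^B` are `ℂ`-linearly isomorphic (encoded by an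
invertible operator `T` with `TA = BT`). -/
theorem stmt_13 (X : Type*) [NormedAddCommGroup X] [NormedSpace ℝ X] [CompleteSpace X]
    (A B : X →L[ℝ] X) (hA : A * A = -1) (hB : B * B = -1) (hAB : A * B = B * A)
    (hconj : ∃ C : X →L[ℝ] X, IsUnit C ∧ C * A = -(A * C))
    (hprim : IsPrimaryStructure A) :
    ∃ T : X →L[ℝ] X, IsUnit T ∧ T * A = B * T := by
  obtain ⟨C, hCunit, hCA⟩ := hconj
  obtain ⟨D, hCD, hDC⟩ := isUnit_iff_exists.mp hCunit
  -- D also anticommutes with A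
  have e1 : D * ((C * A) * D) = A * D := by
    rw [← mul_assoc, ← mul_assoc, hDC, one_mul]
  have e2 : D * ((-(A * C)) * D) = -(D * A) := by
    rw [neg_mul, mul_assoc, hCD, mul_one, mul_neg]
  have e3 : A * D = -(D * A) := by rw [← e1, hCA]; exact e2
  have hDA : D * A = -(A * D) := by rw [e3, neg_neg]
  -- the projection P = (1 + AB)/2
  set P : X →L[ℝ] X := (2:ℝ)⁻¹ • (1 + A * B) with hPdef
  have hAP : A * P = (2:ℝ)⁻¹ • (A - B) := by
    rw [hPdef, mul_smul_comm, mul_add, mul_one, ← mul_assoc, hA, neg_one_mul,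
      ← sub_eq_add_neg]
  have hPA : P * A = A * P := by
    rw [hAP, hPdef, smul_mul_assoc, add_mul, one_mul, mul_assoc, ← hAB, ← mul_assoc, hA,
      neg_one_mul, ← sub_eq_add_neg]
  have hBP : B * P = -(A * P) := by
    rw [hAP, hPdef, mul_smul_comm, mul_add, mul_one, ← mul_assoc, ← hAB, mul_assoc, hB,
      mul_neg_one, ← sub_eq_add_neg, ← smul_neg, neg_sub]
  have hPP : P * P = P := by
    have hPAB : P * (A * B) = P := by
      rw [← mul_assoc, hPA, hAP, smul_mul_assoc, sub_mul, hB, sub_neg_eq_add, hPdef,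
        add_comm (A * B) 1]
    calc P * P = (2:ℝ)⁻¹ • (P * (1 + A * B)) := by rw [hPdef]; rw [mul_smul_comm]
      _ = (2:ℝ)⁻¹ • (P + P) := by rw [mul_add, mul_one, hPAB]
      _ = P := by rw [← two_smul ℝ, smul_smul]; norm_num
  have hBQ : B * (1 - P) = A * (1 - P) := by
    rw [mul_sub, mul_sub, mul_one, mul_one, hBP, hAP]
    module
  have hQA : (1 - P) * A = A * (1 - P) := by
    rw [sub_mul, mul_sub, one_mul, mul_one, hPA]
  -- pointwise (right-associated) rewrite rules
  have hCA' : ∀ x : X →L[ℝ] X, C * (A * x) = -(A * (C * x)) := fun x => by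
    rw [← mul_assoc, hCA, neg_mul, mul_assoc]
  have hDA' : ∀ x : X →L[ℝ] X, D * (A * x) = -(A * (D * x)) := fun x => by
    rw [← mul_assoc, hDA, neg_mul, mul_assoc]
  have hCD' : ∀ x : X →L[ℝ] X, C * (D * x) = x := fun x => by
    rw [← mul_assoc, hCD, one_mul]
  have hDC' : ∀ x : X →L[ℝ] X, D * (C * x) = x := fun x => by
    rw [← mul_assoc, hDC, one_mul]
  have hPA' : ∀ x : X →L[ℝ] X, P * (A * x) = A * (P * x) := fun x => by
    rw [← mul_assoc, hPA, mul_assoc]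
  rcases hprim P hPP hPA with ⟨T, S, hTA, hSA, hST, hTS⟩ | ⟨T, S, hTA, hSA, hST, hTS⟩
  · -- Case 1 : T S = P ; take U = T C S + (1 - P)
    have hTA' : ∀ x : X →L[ℝ] X, T * (A * x) = A * (T * x) := fun x => by
      rw [← mul_assoc, hTA, mul_assoc]
    have hST' : ∀ x : X →L[ℝ] X, S * (T * x) = x := fun x => by
      rw [← mul_assoc, hST, one_mul]
    have hPT : P * T = T := by rw [← hTS, mul_assoc, hST, mul_one]
    have hSP : S * P = S := by rw [← hTS, ← mul_assoc, hST, one_mul]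
    have hQT : (1 - P) * T = 0 := by rw [sub_mul, one_mul, hPT, sub_self]
    have hSQ : S * (1 - P) = 0 := by rw [mul_sub, mul_one, hSP, sub_self]
    have hBT : B * T = -(A * T) := by
      rw [← hPT, ← mul_assoc, hBP, neg_mul, mul_assoc]
    have hBT' : ∀ x : X →L[ℝ] X, B * (T * x) = -(A * (T * x)) := fun x => by
      rw [← mul_assoc, hBT, neg_mul, mul_assoc]
    refine ⟨T * C * S + (1 - P), ?_, ?_⟩
    · refine isUnit_iff_exists.mpr ⟨T * D * S + (1 - P), ?_, ?_⟩
      · have f1 : T * C * S * (T * D * S) = P := by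
          simp only [mul_assoc, hST', hCD']; rw [← hTS]
        have f2 : T * C * S * (1 - P) = 0 := by
          simp only [mul_assoc, hSQ, mul_zero]
        have f3 : (1 - P) * (T * D * S) = 0 := by
          rw [← mul_assoc, ← mul_assoc, hQT, zero_mul, zero_mul]
        have f4 : (1 - P) * (1 - P) = 1 - P := by
          rw [mul_sub, mul_one, sub_mul, one_mul, hPP, sub_self, sub_zero]
        rw [add_mul, mul_add, mul_add, f1, f2, f3, f4]
        rw [add_zero, zero_add, add_sub_cancel]
      · have f1 : T * D * S * (T * C * S) = P := by
          simp only [mul_assoc, hST', hDC']; rw [← hTS]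
        have f2 : T * D * S * (1 - P) = 0 := by
          simp only [mul_assoc, hSQ, mul_zero]
        have f3 : (1 - P) * (T * C * S) = 0 := by
          rw [← mul_assoc, ← mul_assoc, hQT, zero_mul, zero_mul]
        have f4 : (1 - P) * (1 - P) = 1 - P := by
          rw [mul_sub, mul_one, sub_mul, one_mul, hPP, sub_self, sub_zero]
        rw [add_mul, mul_add, mul_add, f1, f2, f3, f4]
        rw [add_zero, zero_add, add_sub_cancel]
    · rw [add_mul, mul_add, hQA, hBQ]
      congr 1
      simp only [mul_assoc, hSA, hCA', hTA', hBT', mul_neg]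
  · -- Case 2 : T S = 1 - P ; take G = (P + T D S) C
    have hTA' : ∀ x : X →L[ℝ] X, T * (A * x) = A * (T * x) := fun x => by
      rw [← mul_assoc, hTA, mul_assoc]
    have hSA' : ∀ x : X →L[ℝ] X, S * (A * x) = A * (S * x) := fun x => by
      rw [← mul_assoc, hSA, mul_assoc]
    have hST' : ∀ x : X →L[ℝ] X, S * (T * x) = x := fun x => by
      rw [← mul_assoc, hST, one_mul]
    have hQT : (1 - P) * T = T := by rw [← hTS, mul_assoc, hST, mul_one]
    have hSQ : S * (1 - P) = S := by rw [← hTS, ← mul_assoc, hST, one_mul]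
    have hPT : P * T = 0 := by
      have h := hQT; rw [sub_mul, one_mul] at h
      exact sub_eq_self.mp h
    have hSP : S * P = 0 := by
      have h := hSQ; rw [mul_sub, mul_one] at h
      exact sub_eq_self.mp h
    have hBT : B * T = A * T := by
      conv_lhs => rw [← hQT, ← mul_assoc, hBQ]
      rw [mul_assoc, hQT]
    have hBT' : ∀ x : X →L[ℝ] X, B * (T * x) = A * (T * x) := fun x => by
      rw [← mul_assoc, hBT, mul_assoc]
    have hBP' : ∀ x : X →L[ℝ] X, B * (P * x) = -(A * (P * x)) := fun x => by
      rw [← mul_assoc, hBP, neg_mul, mul_assoc]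
    refine ⟨(P + T * D * S) * C, ?_, ?_⟩
    · refine isUnit_iff_exists.mpr ⟨D * (P + T * C * S), ?_, ?_⟩
      · have mid : C * (D * (P + T * C * S)) = P + T * C * S := hCD' _
        rw [mul_assoc, mid, add_mul, mul_add, mul_add]
        have f1 : P * P = P := hPP
        have f2 : P * (T * C * S) = 0 := by
          rw [← mul_assoc, ← mul_assoc, hPT, zero_mul, zero_mul]
        have f3 : T * D * S * P = 0 := by
          rw [mul_assoc, mul_assoc, hSP, mul_zero, mul_zero]
        have f4 : T * D * S * (T * C * S) = 1 - P := by
          simp only [mul_assoc, hST', hDC']; exact hTS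
        rw [f1, f2, f3, f4, add_zero, zero_add, add_sub_cancel]
      · have inner : (P + T * C * S) * ((P + T * D * S) * C) = C := by
          rw [← mul_assoc, add_mul, mul_add, mul_add]
          have f2 : P * (T * D * S) = 0 := by
            rw [← mul_assoc, ← mul_assoc, hPT, zero_mul, zero_mul]
          have f3 : T * C * S * P = 0 := by
            rw [mul_assoc, mul_assoc, hSP, mul_zero, mul_zero]
          have f4 : T * C * S * (T * D * S) = 1 - P := by
            simp only [mul_assoc, hST', hCD']; exact hTS
          rw [hPP, f2, f3, f4, add_zero, zero_add, add_sub_cancel, one_mul]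
        rw [mul_assoc, inner, hDC]
    · have lhs : (P + T * D * S) * C * A = A * (T * (D * (S * C))) - A * (P * C) := by
        rw [mul_assoc, hCA, mul_neg, add_mul, hPA' C]
        have g2 : T * D * S * (A * C) = -(A * (T * (D * (S * C)))) := by
          simp only [mul_assoc, hSA', hDA', hTA', mul_neg]
        rw [g2]
        abel
      have rhs : B * ((P + T * D * S) * C) = A * (T * (D * (S * C))) - A * (P * C) := by
        rw [add_mul, mul_add, hBP' C]
        have g4 : B * (T * D * S * C) = A * (T * (D * (S * C))) := by
          simp only [mul_assoc, hBT']
        rw [g4]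
        abel
      rw [lhs, rhs]
end

section
/- Two vectors x, y in the complex space ℓ_∞(Γ, ℂ) with ‖x‖ ≤ 1, ‖y‖ ≤ 1 have non-disjoint supports if and only if there exist z ∈ ℓ_∞(Γ, ℂ) and ε = ±1 with ‖z‖ ≤ 1, ‖x + z‖ ≤ 1, ‖εy + z‖ ≤ 1, and ‖x + εy + z‖ > 1. -/
/-!
If `x` and `y` have disjoint supports, every coordinate of `x + εy + z` is a coordinate of
`x + z` or of `εy + z`, so no such `z` exists. Conversely, at a common point `γ` of the supports
pick the sign `ε` making the real inner product of `a = x γ` and `b = ε y γ` nonnegative; then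
`‖a + b‖ > max ‖a‖ ‖b‖`, and pushing `a + b` outward by the slack `1 - max ‖a‖ ‖b‖` in the
single coordinate `γ` produces `z`.
-/

open scoped RealInnerProductSpace

section InnerProduct

variable {E : Type*} [NormedAddCommGroup E] [InnerProductSpace ℝ E]

theorem exists_sign_inner_smul_nonneg (a b : E) :
    ∃ ε : ℝ, (ε = 1 ∨ ε = -1) ∧ 0 ≤ ⟪a, ε • b⟫ := by
  rcases le_total 0 ⟪a, b⟫ with h | h
  · exact ⟨1, .inl rfl, by simpa using h⟩
  · exact ⟨-1, .inr rfl, by simpa using h⟩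

theorem norm_lt_norm_add_of_inner_nonneg {a b : E} (hb : b ≠ 0) (h : 0 ≤ ⟪a, b⟫) :
    ‖a‖ < ‖a + b‖ := by
  have hb' : 0 < ‖b‖ := norm_pos_iff.mpr hb
  have : ‖a‖ ^ 2 < ‖a + b‖ ^ 2 := by rw [norm_add_sq_real]; nlinarith
  exact lt_of_pow_lt_pow_left₀ 2 (norm_nonneg _) this

theorem max_norm_lt_norm_add_of_inner_nonneg {a b : E} (ha : a ≠ 0) (hb : b ≠ 0)
    (h : 0 ≤ ⟪a, b⟫) : max ‖a‖ ‖b‖ < ‖a + b‖ := by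
  refine max_lt (norm_lt_norm_add_of_inner_nonneg hb h) ?_
  rw [add_comm]
  exact norm_lt_norm_add_of_inner_nonneg ha (real_inner_comm a b ▸ h)

end InnerProduct

theorem exists_norm_add_le_one_lt_norm_add_add {E : Type*} [NormedAddCommGroup E]
    [NormedSpace ℝ E] {a b : E} (ha : ‖a‖ ≤ 1) (hb : ‖b‖ ≤ 1) (hab : max ‖a‖ ‖b‖ < ‖a + b‖) :
    ∃ w : E, ‖w‖ ≤ 1 ∧ ‖a + w‖ ≤ 1 ∧ ‖b + w‖ ≤ 1 ∧ 1 < ‖a + b + w‖ := by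
  set M := max ‖a‖ ‖b‖
  have hs : 0 < ‖a + b‖ := (le_max_of_le_left (norm_nonneg a)).trans_lt hab
  set c := (1 - M) / ‖a + b‖
  have hc : 0 ≤ c := div_nonneg (by simp [M, ha, hb]) hs.le
  have hcs : c * ‖a + b‖ = 1 - M := div_mul_cancel₀ _ hs.ne'
  have hw : ‖c • (a + b)‖ = 1 - M := by rw [norm_smul, Real.norm_of_nonneg hc, hcs]
  refine ⟨c • (a + b), ?_, ?_, ?_, ?_⟩
  · rw [hw]; linarith [le_max_left ‖a‖ ‖b‖, norm_nonneg a]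
  · linarith [norm_add_le a (c • (a + b)), le_max_left ‖a‖ ‖b‖]
  · linarith [norm_add_le b (c • (a + b)), le_max_right ‖a‖ ‖b‖]
  · have : ‖a + b + c • (a + b)‖ = ‖a + b‖ + (1 - M) := by
      rw [show a + b + c • (a + b) = (1 + c) • (a + b) by rw [add_smul, one_smul], norm_smul,
        Real.norm_of_nonneg (by positivity), add_mul, one_mul, hcs]
    linarith

namespace lp

variable {ι : Type*} {E : ι → Type*} [∀ i, NormedAddCommGroup (E i)]

theorem norm_add_add_le_max_of_disjoint {x y : lp E ⊤} (z : lp E ⊤)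
    (hxy : ∀ i, x i = 0 ∨ y i = 0) : ‖x + y + z‖ ≤ max ‖x + z‖ ‖y + z‖ := by
  refine norm_le_of_forall_le (le_max_of_le_left (norm_nonneg _)) fun i => ?_
  rcases hxy i with h | h
  · simpa [h] using (norm_apply_le_norm ENNReal.top_ne_zero (y + z) i).trans (le_max_right _ _)
  · simpa [h] using (norm_apply_le_norm ENNReal.top_ne_zero (x + z) i).trans (le_max_left _ _)

theorem norm_add_single_le [DecidableEq ι] {x : lp E ⊤} {i : ι} {w : E i} {C : ℝ}
    (hx : ‖x‖ ≤ C) (hi : ‖x i + w‖ ≤ C) : ‖x + lp.single ⊤ i w‖ ≤ C := by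
  refine norm_le_of_forall_le ((norm_nonneg x).trans hx) fun j => ?_
  rcases eq_or_ne j i with rfl | hj
  · simpa using hi
  · simpa [hj] using (norm_apply_le_norm ENNReal.top_ne_zero x j).trans hx

end lp

/-- two vectors `x, y` in `ℓ∞(Γ, ℂ)` of norm at most one have
non-disjoint supports if and only if there exist `z ∈ ℓ∞(Γ, ℂ)` and `ε = ±1` with
`‖z‖ ≤ 1`, `‖x + z‖ ≤ 1`, `‖εy + z‖ ≤ 1` and `‖x + εy + z‖ > 1`. -/
theorem stmt_15 (Γ : Type*) (x y : lp (fun _ : Γ => ℂ) ⊤)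
    (hx : ‖x‖ ≤ 1) (hy : ‖y‖ ≤ 1) :
    (∃ γ : Γ, x γ ≠ 0 ∧ y γ ≠ 0) ↔
      ∃ (z : lp (fun _ : Γ => ℂ) ⊤) (ε : ℝ), (ε = 1 ∨ ε = -1) ∧
        ‖z‖ ≤ 1 ∧ ‖x + z‖ ≤ 1 ∧ ‖ε • y + z‖ ≤ 1 ∧ 1 < ‖x + ε • y + z‖ := by
  classical
  have hcoord (v : lp (fun _ : Γ => ℂ) ⊤) (γ : Γ) := lp.norm_apply_le_norm ENNReal.top_ne_zero v γ
  constructor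
  · rintro ⟨γ, hxγ, hyγ⟩
    obtain ⟨ε, hε, hinner⟩ := exists_sign_inner_smul_nonneg (x γ) (y γ)
    have hεy : ‖ε • y‖ = ‖y‖ := by rcases hε with rfl | rfl <;> simp
    have hεyγ : ε • y γ ≠ 0 := smul_ne_zero (by rcases hε with rfl | rfl <;> norm_num) hyγ
    obtain ⟨w, hw, hxw, hyw, hxyw⟩ := exists_norm_add_le_one_lt_norm_add_add
      ((hcoord x γ).trans hx) ((hcoord (ε • y) γ).trans (hεy ▸ hy))
      (max_norm_lt_norm_add_of_inner_nonneg hxγ hεyγ hinner)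
    let z : lp (fun _ : Γ => ℂ) ⊤ := lp.single ⊤ γ w
    have hzγ : (x + ε • y + z) γ = x γ + (ε • y) γ + w := by
      rw [lp.coeFn_add, Pi.add_apply, lp.coeFn_add, Pi.add_apply, lp.single_apply_self]
    refine ⟨z, ε, hε, ?_, lp.norm_add_single_le hx hxw,
      lp.norm_add_single_le (hεy ▸ hy) hyw, hxyw.trans_le (hzγ ▸ hcoord _ γ)⟩
    rwa [lp.norm_single ENNReal.zero_lt_top]
  · rintro ⟨z, ε, -, -, hxz, hyz, hbig⟩
    by_contra! hdisj
    have hxy : ∀ γ, x γ = 0 ∨ (ε • y) γ = 0 := fun γ => by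
      by_cases h : x γ = 0
      · exact .inl h
      · simp [hdisj γ h]
    exact hbig.not_ge ((lp.norm_add_add_le_max_of_disjoint z hxy).trans (max_le hxz hyz))
end

section
/- There exists a norm on ℂ² (a complex norm, namely ‖(x,y)‖ = max_{0≤k≤4} |x − λ_k y| for suitable unimodular λ₁,…,λ₄ with positive real parts, λ₀ = 0, and λ_j λ_k ≠ λ_l λ_m whenever {j,k} ≠ {l,m} in {1,2,3,4}) for which every surjective ℝ-linear isometry of ℂ² is of the form (x,y) ↦ (λx, λy) for some complex λ with |λ| = 1. -/
/-!
Write `f_k (x, y) = x - λ_k y`, so that the norm is `max_k |f_k|`. Near a point of the unit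
sphere where `f_k` alone attains the norm, the unit ball contains a segment in direction `v`
exactly when `f_k v = 0`. A norm-preserving `T` therefore maps each line `ker f_k` into some
`ker f_{σ k}`, so `f_{σ k} ∘ T = g_k ∘ f_k` with `σ` a permutation and `g_k` an `ℝ`-linear
isometry of `ℂ`. All moduli `|f_j (T (x, 0))|` are then equal to `|x|`; as three distinct points
of the unit circle lie on no other circle, `T (x, 0)` is on the axis `ℂ × {0}`, and hence all
`g_k` are one isometry `g`. At `(0, 1)` this reads `λ_{σ k} δ = β + g λ_k`. Since the `λ_k`
are close to each other, `σ` fixes `0` and `β = 0`.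
Finally `g` is `z ↦ a z` or `z ↦ a z̄`; distinctness of the products `λ_j λ_k` excludes the
second case (it makes `λ_{σ k} λ_k` constant) and forces `σ = id` in the first
(as `λ_k² = λ_{σ k} λ_{σ⁻¹ k}`), so `T = a • id`.
-/

open Complex ComplexConjugate Filter Topology Function

namespace SupNormC2

lemma eq_zero_of_isLocalMax_norm_add_smul {E : Type*} [NormedAddCommGroup E]
    [InnerProductSpace ℝ E] {a b : E} (h : IsLocalMax (fun t : ℝ => ‖a + t • b‖) 0) : b = 0 := by
  have hneg : ∀ᶠ t in 𝓝 (0 : ℝ), ‖a - t • b‖ ≤ ‖a‖ := by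
    simpa [IsLocalMax, IsMaxFilter, sub_eq_add_neg] using
      (continuous_neg.tendsto' (0 : ℝ) 0 neg_zero).eventually h
  have hpos : ∀ᶠ t in 𝓝 (0 : ℝ), ‖a + t • b‖ ≤ ‖a‖ := by
    simpa [IsLocalMax, IsMaxFilter] using h
  obtain ⟨t, ⟨h₁, h₂⟩, ht⟩ :=
    ((hpos.and hneg).filter_mono nhdsWithin_le_nhds |>.and self_mem_nhdsWithin).exists
      (f := 𝓝[≠] (0 : ℝ))
  have hpar := parallelogram_law_with_norm ℝ a (t • b)
  have : ‖t • b‖ = 0 := by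
    nlinarith [norm_nonneg (a + t • b), norm_nonneg (a - t • b), norm_nonneg (t • b)]
  exact (smul_eq_zero.1 (norm_eq_zero.1 this)).resolve_left ht

lemma eq_zero_of_quadratic_eq_zero {K : Type*} [Field K] {p q r a b c : K} (hab : a ≠ b)
    (hac : a ≠ c) (hbc : b ≠ c) (ha : p * a ^ 2 + q * a + r = 0)
    (hb : p * b ^ 2 + q * b + r = 0) (hc : p * c ^ 2 + q * c + r = 0) :
    p = 0 ∧ q = 0 ∧ r = 0 := by
  have hab' : p * (a + b) + q = 0 := mul_left_cancel₀ (sub_ne_zero.2 hab) <| by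
    linear_combination ha - hb
  have hac' : p * (a + c) + q = 0 := mul_left_cancel₀ (sub_ne_zero.2 hac) <| by
    linear_combination ha - hc
  have hp : p = 0 := mul_left_cancel₀ (sub_ne_zero.2 hbc) <| by
    linear_combination hab' - hac'
  have hq : q = 0 := by linear_combination hab' - (a + b) * hp
  exact ⟨hp, hq, by linear_combination ha - a ^ 2 * hp - a * hq⟩

lemma quadratic_eq_zero_of_norm_sub_mul_eq {x y u : ℂ} (hu : ‖u‖ = 1)
    (h : ‖x - u * y‖ = ‖x‖) :
    y * conj x * u ^ 2 + -(y * conj y) * u + x * conj y = 0 := by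
  have h₁ : (x - u * y) * conj (x - u * y) = x * conj x := by
    rw [mul_conj', mul_conj', h]
  have h₂ : u * conj u = 1 := by rw [mul_conj', hu]; simp
  rw [map_sub, map_mul] at h₁
  linear_combination (-u) * h₁ - (x * conj y - u * y * conj y) * h₂

lemma eq_zero_of_norm_sub_mul_eq {x y a b c : ℂ} (ha : ‖a‖ = 1) (hb : ‖b‖ = 1) (hc : ‖c‖ = 1)
    (hab : a ≠ b) (hac : a ≠ c) (hbc : b ≠ c) (hxa : ‖x - a * y‖ = ‖x‖)
    (hxb : ‖x - b * y‖ = ‖x‖) (hxc : ‖x - c * y‖ = ‖x‖) : y = 0 := by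
  have := (eq_zero_of_quadratic_eq_zero hab hac hbc
    (quadratic_eq_zero_of_norm_sub_mul_eq ha hxa) (quadratic_eq_zero_of_norm_sub_mul_eq hb hxb)
    (quadratic_eq_zero_of_norm_sub_mul_eq hc hxc)).2.1
  rw [neg_eq_zero, mul_conj'] at this
  simpa using this

variable {ι : Type*}

def form (a : ℂ) : ℂ × ℂ →ₗ[ℂ] ℂ := LinearMap.fst ℂ ℂ ℂ - a • LinearMap.snd ℂ ℂ ℂ

@[simp]
lemma form_apply (a : ℂ) (p : ℂ × ℂ) : form a p = p.1 - a * p.2 := rfl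

lemma form_add_smul (a : ℂ) (p v : ℂ × ℂ) (t : ℝ) :
    form a (p + t • v) = form a p + t • form a v := by
  rw [map_add, LinearMap.map_smul_of_tower]

lemma eq_of_form_eq {a b : ℂ} (hab : a ≠ b) {u v : ℂ × ℂ} (ha : form a u = form a v)
    (hb : form b u = form b v) : u = v := by
  simp only [form_apply] at ha hb
  have h2 : u.2 = v.2 := by
    have : (a - b) * (u.2 - v.2) = 0 := by linear_combination hb - ha
    simpa [sub_eq_zero, hab] using this
  exact Prod.ext (by linear_combination ha + a * h2) h2

lemma eq_of_form_eq_zero {a b : ℂ} {v : ℂ × ℂ} (hv : v ≠ 0) (ha : form a v = 0)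
    (hb : form b v = 0) : a = b := by
  by_contra hab
  exact hv (eq_of_form_eq hab (ha.trans (map_zero _).symm) (hb.trans (map_zero _).symm))

noncomputable def supNorm (l : ι → ℂ) (p : ℂ × ℂ) : ℝ := ⨆ k, ‖form (l k) p‖

lemma supNorm_le [Nonempty ι] (l : ι → ℂ) {p : ℂ × ℂ} {c : ℝ}
    (h : ∀ k, ‖form (l k) p‖ ≤ c) : supNorm l p ≤ c :=
  ciSup_le h

lemma supNorm_smul (l : ι → ℂ) (c : ℂ) (p : ℂ × ℂ) :
    supNorm l (c • p) = ‖c‖ * supNorm l p := by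
  simp only [supNorm, map_smul, smul_eq_mul, norm_mul,
    Real.mul_iSup_of_nonneg (norm_nonneg c)]

def IsFacetPoint (l : ι → ℂ) (k : ι) (w : ℂ × ℂ) : Prop :=
  form (l k) w = 1 ∧ ∀ j ≠ k, ‖form (l j) w‖ < 1

section Finite

variable [Finite ι]

lemma norm_form_le_supNorm (l : ι → ℂ) (p : ℂ × ℂ) (k : ι) :
    ‖form (l k) p‖ ≤ supNorm l p :=
  le_ciSup (f := fun k => ‖form (l k) p‖) (Set.finite_range _).bddAbove k

lemma exists_norm_form_eq_supNorm [Nonempty ι] (l : ι → ℂ) (p : ℂ × ℂ) :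
    ∃ k, ‖form (l k) p‖ = supNorm l p :=
  exists_eq_ciSup_of_finite

lemma supNorm_add_le [Nonempty ι] (l : ι → ℂ) (p q : ℂ × ℂ) :
    supNorm l (p + q) ≤ supNorm l p + supNorm l q :=
  supNorm_le l fun k => (map_add (form (l k)) p q ▸ norm_add_le _ _).trans
    (add_le_add (norm_form_le_supNorm l p k) (norm_form_le_supNorm l q k))

lemma eq_zero_of_supNorm_eq_zero {l : ι → ℂ} {j k : ι} (hjk : l j ≠ l k) {p : ℂ × ℂ}
    (hp : supNorm l p = 0) : p = 0 := by
  have h : ∀ m, form (l m) p = form (l m) 0 := fun m => by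
    simpa [hp] using norm_form_le_supNorm l p m
  exact eq_of_form_eq hjk (h j) (h k)

variable {l : ι → ℂ}

lemma isLocalMax_supNorm_add_smul {p v : ℂ × ℂ} {k : ι} (hv : form (l k) v = 0)
    (hp : ∀ j ≠ k, ‖form (l j) p‖ < supNorm l p) :
    IsLocalMax (fun t : ℝ => supNorm l (p + t • v)) 0 := by
  have : Nonempty ι := ⟨k⟩
  have hj : ∀ j, ∀ᶠ t in 𝓝 (0 : ℝ), ‖form (l j) (p + t • v)‖ ≤ supNorm l p := by
    intro j
    by_cases hjk : j = k
    · subst hjk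
      exact Eventually.of_forall fun t => by
        rw [form_add_smul, hv, smul_zero, add_zero]
        exact norm_form_le_supNorm l p j
    · have hc : Continuous fun t : ℝ => ‖form (l j) (p + t • v)‖ := by fun_prop
      exact (hc.continuousAt.eventually_lt continuousAt_const (by simpa using hp j hjk)).mono
        fun _ h => h.le
  filter_upwards [eventually_all.2 hj] with t ht
  simpa using supNorm_le l ht

lemma form_eq_zero_of_isLocalMax {p v : ℂ × ℂ} {k : ι} (hk : ‖form (l k) p‖ = supNorm l p)
    (h : IsLocalMax (fun t : ℝ => supNorm l (p + t • v)) 0) : form (l k) v = 0 := by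
  refine eq_zero_of_isLocalMax_norm_add_smul (a := form (l k) p) ?_
  filter_upwards [h] with t ht
  rw [← form_add_smul, zero_smul, add_zero, hk]
  simpa using (norm_form_le_supNorm l _ k).trans ht

lemma form_map_eq_zero (T : (ℂ × ℂ) →ₗ[ℝ] ℂ × ℂ) (hT : ∀ p, supNorm l (T p) = supNorm l p)
    {p v : ℂ × ℂ} {k m : ι} (hp : ∀ j ≠ k, ‖form (l j) p‖ < supNorm l p)
    (hm : ‖form (l m) (T p)‖ = supNorm l (T p)) (hv : form (l k) v = 0) :
    form (l m) (T v) = 0 :=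
  form_eq_zero_of_isLocalMax hm <| by
    simpa only [← map_smul, ← map_add, hT] using isLocalMax_supNorm_add_smul hv hp

lemma IsFacetPoint.supNorm_smul {k : ι} {w : ℂ × ℂ} (hw : IsFacetPoint l k w) (z : ℂ) :
    supNorm l (z • w) = ‖z‖ := by
  have : Nonempty ι := ⟨k⟩
  have hw1 : supNorm l w = 1 := le_antisymm
    (supNorm_le l fun j => by
      rcases eq_or_ne j k with rfl | hj
      exacts [by simp [hw.1], (hw.2 j hj).le])
    (by simpa [hw.1] using norm_form_le_supNorm l w k)
  rw [SupNormC2.supNorm_smul, hw1, mul_one]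

lemma IsFacetPoint.norm_form_lt {k j : ι} {w : ℂ × ℂ} (hw : IsFacetPoint l k w) {z : ℂ}
    (hz : z ≠ 0) (hj : j ≠ k) : ‖form (l j) (z • w)‖ < supNorm l (z • w) := by
  rw [hw.supNorm_smul, map_smul, norm_smul]
  exact mul_lt_of_lt_one_right (norm_pos_iff.2 hz) (hw.2 j hj)

lemma exists_form_map_eq_zero (hl : Injective l) (T : (ℂ × ℂ) →ₗ[ℝ] ℂ × ℂ)
    (hTinj : Injective T) (hT : ∀ p, supNorm l (T p) = supNorm l p) {k : ι} {w : ℂ × ℂ}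
    (hw : IsFacetPoint l k w) :
    ∃ m, (∀ v, form (l k) v = 0 → form (l m) (T v) = 0) ∧
      ∀ z : ℂ, ‖form (l m) (T (z • w))‖ = ‖z‖ := by
  have : Nonempty ι := ⟨k⟩
  have hker : ∀ z : ℂ, z ≠ 0 → ∀ m, ‖form (l m) (T (z • w))‖ = supNorm l (T (z • w)) →
      ∀ v, form (l k) v = 0 → form (l m) (T v) = 0 :=
    fun z hz m hm v hv =>
      form_map_eq_zero (p := z • w) T hT (fun j hj => hw.norm_form_lt hz hj) hm hv
  obtain ⟨m, hm⟩ := exists_norm_form_eq_supNorm l (T w)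
  have hmk := hker 1 one_ne_zero m (by rwa [one_smul])
  refine ⟨m, hmk, fun z => ?_⟩
  rcases eq_or_ne z 0 with rfl | hz
  · simp
  obtain ⟨m', hm'⟩ := exists_norm_form_eq_supNorm l (T (z • w))
  have hv : ((l k, 1) : ℂ × ℂ) ≠ 0 := by simp [Prod.ext_iff]
  have hm'm : m' = m := hl <| eq_of_form_eq_zero ((map_ne_zero_iff T hTinj).2 hv)
    (hker z hz m' hm' _ (by simp)) (hmk _ (by simp))
  rw [← hm'm, hm', hT, hw.supNorm_smul]

theorem exists_bijective_form_comp (hl : Injective l) (hw : ∀ k, ∃ w, IsFacetPoint l k w)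
    (T : (ℂ × ℂ) ≃ₗ[ℝ] ℂ × ℂ) (hT : ∀ p, supNorm l (T p) = supNorm l p) :
    ∃ σ : ι → ι, Bijective σ ∧
      ∀ k, ∃ g : ℂ →ₗᵢ[ℝ] ℂ, ∀ p, form (l (σ k)) (T p) = g (form (l k) p) := by
  choose w hw using hw
  have hT' : ∀ p, supNorm l (T.symm p) = supNorm l p := fun p => by
    rw [← hT, T.apply_symm_apply]
  choose σ hσ hσg using fun k =>
    exists_form_map_eq_zero hl T.toLinearMap T.injective hT (hw k)
  choose τ hτ _ using fun k =>
    exists_form_map_eq_zero hl T.symm.toLinearMap T.symm.injective hT' (hw k)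
  have hleft : LeftInverse τ σ := fun k => hl <| eq_of_form_eq_zero (v := (l k, 1))
    (by simp [Prod.ext_iff]) (by simpa using hτ (σ k) _ (hσ k (l k, 1) (by simp))) (by simp)
  refine ⟨σ, Finite.injective_iff_bijective.1 hleft.injective, fun k => ?_⟩
  let g : ℂ →ₗ[ℝ] ℂ := (form (l (σ k))).restrictScalars ℝ ∘ₗ T.toLinearMap ∘ₗ
    (LinearMap.toSpanSingleton ℂ (ℂ × ℂ) (w k)).restrictScalars ℝ
  refine ⟨⟨g, hσg k⟩, fun p => ?_⟩
  have hp : p = (p - form (l k) p • w k) + form (l k) p • w k := by abel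
  have hker : form (l k) (p - form (l k) p • w k) = 0 := by
    rw [map_sub, map_smul, (hw k).1, smul_eq_mul, mul_one, sub_self]
  have h0 := hσ k _ hker
  rw [LinearEquiv.coe_coe] at h0
  conv_lhs => rw [hp, map_add, map_add, h0, zero_add]
  rfl

end Finite

structure Admissible (l : Fin 5 → ℂ) : Prop where
  zero : l 0 = 0
  norm_eq_one : ∀ k : Fin 5, k ≠ 0 → ‖l k‖ = 1
  norm_sub_one_lt : ∀ k : Fin 5, k ≠ 0 → ‖l k - 1‖ < 1 / 2
  mul_ne_mul : ∀ j k m n : Fin 5, j ≠ 0 → k ≠ 0 → m ≠ 0 → n ≠ 0 →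
    ({j, k} : Finset (Fin 5)) ≠ {m, n} → l j * l k ≠ l m * l n

namespace Admissible

variable {l : Fin 5 → ℂ}

lemma pair_eq_of_mul_eq (hl : Admissible l) {j k m n : Fin 5} (hj : j ≠ 0) (hk : k ≠ 0)
    (hm : m ≠ 0) (hn : n ≠ 0) (h : l j * l k = l m * l n) :
    ({j, k} : Finset (Fin 5)) = {m, n} :=
  not_not.1 fun hne => hl.mul_ne_mul j k m n hj hk hm hn hne h

lemma ne_zero (hl : Admissible l) {k : Fin 5} (hk : k ≠ 0) : l k ≠ 0 :=
  norm_ne_zero_iff.1 (by simp [hl.norm_eq_one k hk])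

lemma injective (hl : Admissible l) : Injective l := by
  intro j k hjk
  rcases eq_or_ne j 0 with rfl | hj
  · by_contra hk
    exact hl.ne_zero (Ne.symm hk) (hjk.symm.trans hl.zero)
  rcases eq_or_ne k 0 with rfl | hk
  · exact absurd (hjk.trans hl.zero) (hl.ne_zero hj)
  have := hl.pair_eq_of_mul_eq hj hj hj hk (by rw [hjk])
  have hkmem : k ∈ ({j, j} : Finset (Fin 5)) := by rw [this]; simp
  simpa [eq_comm] using hkmem

lemma norm_sub_lt_one (hl : Admissible l) {j k : Fin 5} (hj : j ≠ 0) (hk : k ≠ 0) :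
    ‖l j - l k‖ < 1 := by
  calc ‖l j - l k‖ = ‖(l j - 1) - (l k - 1)‖ := by ring_nf
    _ ≤ ‖l j - 1‖ + ‖l k - 1‖ := norm_sub_le _ _
    _ < 1 := by linarith [hl.norm_sub_one_lt j hj, hl.norm_sub_one_lt k hk]

lemma re_pos (hl : Admissible l) {k : Fin 5} (hk : k ≠ 0) : 0 < (l k).re := by
  have := (abs_le.1 ((abs_re_le_norm (l k - 1)).trans (hl.norm_sub_one_lt k hk).le)).1
  simp only [sub_re, one_re] at this
  linarith

lemma exists_isFacetPoint (hl : Admissible l) (k : Fin 5) : ∃ w, IsFacetPoint l k w := by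
  rcases eq_or_ne k 0 with rfl | hk
  · refine ⟨(1, 1 / 2), by simp [hl.zero], fun j hj => ?_⟩
    calc ‖form (l j) (1, 1 / 2)‖ = ‖1 / 2 - (l j - 1) / 2‖ := by
          simp only [form_apply]; ring_nf
      _ ≤ 1 / 2 + ‖l j - 1‖ / 2 := by simpa using norm_sub_le (1 / 2 : ℂ) ((l j - 1) / 2)
      _ < 1 := by linarith [hl.norm_sub_one_lt j hj]
  · have hkk : l k * conj (l k) = 1 := by rw [mul_conj', hl.norm_eq_one k hk]; simp
    refine ⟨(1 / 2, -conj (l k) / 2), by simp only [form_apply]; linear_combination hkk / 2,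
      fun j hj => ?_⟩
    rcases eq_or_ne j 0 with rfl | hj0
    · norm_num [hl.zero]
    have hu : ‖l j * conj (l k)‖ = 1 := by
      simp [hl.norm_eq_one j hj0, hl.norm_eq_one k hk]
    have hu1 : l j * conj (l k) ≠ 1 := fun h =>
      hj (hl.injective (by linear_combination l k * h - l j * hkk))
    have hlt : ‖1 + l j * conj (l k)‖ < 2 := by
      have := norm_add_lt_of_not_sameRay fun h : SameRay ℝ 1 (l j * conj (l k)) =>
        hu1 (h.eq_of_norm_eq (by rw [norm_one, hu])).symm
      rwa [norm_one, hu, one_add_one_eq_two] at this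
    have hform : form (l j) (1 / 2, -conj (l k) / 2) = (1 + l j * conj (l k)) / 2 := by
      simp only [form_apply]; ring
    rw [hform, norm_div, Complex.norm_two]
    linarith

lemma snd_eq_zero (hl : Admissible l) {p : ℂ × ℂ} {r : ℝ} (h : ∀ j, ‖form (l j) p‖ = r) :
    p.2 = 0 := by
  have h0 := h 0
  simp only [form_apply, hl.zero, zero_mul, sub_zero] at h0
  have h' : ∀ j, ‖p.1 - l j * p.2‖ = ‖p.1‖ := fun j => by rw [← form_apply, h, h0]
  exact eq_zero_of_norm_sub_mul_eq (hl.norm_eq_one 1 (by decide)) (hl.norm_eq_one 2 (by decide))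
    (hl.norm_eq_one 3 (by decide)) (hl.injective.ne (by decide)) (hl.injective.ne (by decide))
    (hl.injective.ne (by decide)) (h' 1) (h' 2) (h' 3)

/-- The isometries `g_k` of `exists_bijective_form_comp` all coincide, because `T` preserves
the axis `ℂ × {0}`. -/
lemma exists_form_comp (hl : Admissible l) (T : (ℂ × ℂ) ≃ₗ[ℝ] ℂ × ℂ)
    (hT : ∀ p, supNorm l (T p) = supNorm l p) :
    ∃ σ : Fin 5 → Fin 5, Bijective σ ∧
      ∃ g : ℂ →ₗᵢ[ℝ] ℂ, ∀ k p, form (l (σ k)) (T p) = g (form (l k) p) := by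
  obtain ⟨σ, hσ, hg⟩ := exists_bijective_form_comp hl.injective hl.exists_isFacetPoint T hT
  choose g hg using hg
  have haxis : ∀ x : ℂ, (T (x, 0)).2 = 0 := fun x => hl.snd_eq_zero (r := ‖x‖) fun j => by
    obtain ⟨k, rfl⟩ := hσ.2 j
    simp [hg k]
  have hgk : ∀ k x, g k x = (T (x, 0)).1 := fun k x => by
    simpa [haxis] using (hg k (x, 0)).symm
  exact ⟨σ, hσ, g 0, fun k p => by rw [hg k, hgk, hgk]⟩

lemma map_zero_eq_zero (hl : Admissible l) {σ : Fin 5 → Fin 5} (hσ : Bijective σ)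
    (g : ℂ →ₗᵢ[ℝ] ℂ) {β δ : ℂ} (h : ∀ k, l (σ k) * δ = β + g (l k)) : σ 0 = 0 := by
  by_contra h0
  obtain ⟨k₁, hk₁⟩ := hσ.2 0
  have hk₁0 : k₁ ≠ 0 := by rintro rfl; exact h0 hk₁
  obtain ⟨k, hk0, hkk₁⟩ : ∃ k : Fin 5, k ≠ 0 ∧ k ≠ k₁ := by
    have : ∀ m : Fin 5, ∃ k : Fin 5, k ≠ 0 ∧ k ≠ m := by decide
    exact this k₁
  have hσk : σ k ≠ 0 := fun h => hkk₁ (hσ.1 (h.trans hk₁.symm))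
  have hβ : β = -g (l k₁) := by
    have := h k₁
    rw [hk₁, hl.zero, zero_mul] at this
    linear_combination -this
  have hδ : ‖δ‖ = 1 := by
    have := congrArg norm (h 0)
    rwa [hl.zero, map_zero, add_zero, hβ, norm_mul, hl.norm_eq_one _ h0, one_mul, norm_neg,
      g.norm_map, hl.norm_eq_one _ hk₁0] at this
  have : ‖δ‖ = ‖l k - l k₁‖ := by
    have := congrArg norm (h k)
    rwa [hβ, neg_add_eq_sub, ← map_sub, g.norm_map, norm_mul, hl.norm_eq_one _ hσk,
      one_mul] at this
  linarith [hl.norm_sub_lt_one hk0 hk₁0]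

lemma false_of_mul_conj (hl : Admissible l) {σ : Fin 5 → Fin 5} (hσ : Injective σ)
    (hσ0 : σ 0 = 0) {a δ : ℂ} (ha : a ≠ 0) (h : ∀ k, l (σ k) * δ = a * conj (l k)) : False := by
  have hσk : ∀ k ≠ 0, σ k ≠ 0 := fun k hk h => hk (hσ (h.trans hσ0.symm))
  have hprod : ∀ k ≠ 0, l (σ k) * l k * δ = a := fun k hk => by
    have hconj : conj (l k) * l k = 1 := by rw [conj_mul', hl.norm_eq_one k hk]; simp
    linear_combination l k * h k + a * hconj
  have hδ : δ ≠ 0 := by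
    rintro rfl
    exact ha (by simpa using (hprod 1 one_ne_zero).symm)
  have hpair : ∀ k ≠ 0, ({σ 1, 1} : Finset (Fin 5)) = {σ k, k} := fun k hk =>
    hl.pair_eq_of_mul_eq (hσk 1 one_ne_zero) one_ne_zero (hσk k hk) hk
      (mul_right_cancel₀ hδ ((hprod 1 one_ne_zero).trans (hprod k hk).symm))
  have : ∀ s₁ s₂ s₃ : Fin 5, ({s₁, 1} : Finset (Fin 5)) = {s₂, 2} →
      ({s₁, 1} : Finset (Fin 5)) ≠ {s₃, 3} := by decide
  exact this _ _ _ (hpair 2 (by decide)) (hpair 3 (by decide))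

lemma eq_self_of_mul (hl : Admissible l) {σ : Fin 5 → Fin 5} (hσ : Bijective σ)
    (hσ0 : σ 0 = 0) {a δ : ℂ} (ha : a ≠ 0) (h : ∀ k, l (σ k) * δ = a * l k) (k : Fin 5) :
    σ k = k := by
  rcases eq_or_ne k 0 with rfl | hk
  · exact hσ0
  obtain ⟨k', hk'⟩ := hσ.2 k
  have hk'0 : k' ≠ 0 := by rintro rfl; exact hk (hk'.symm.trans hσ0)
  have hσk : σ k ≠ 0 := fun h => hk (hσ.1 (h.trans hσ0.symm))
  have hδ : δ ≠ 0 := by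
    rintro rfl
    exact mul_ne_zero ha (hl.ne_zero hk) (by simpa using (h k).symm)
  have hmul : l (σ k) * l k' = l k * l k := mul_left_cancel₀ (mul_ne_zero ha hδ) <| by
    have h' := h k'
    rw [hk'] at h'
    linear_combination (a * l k') * h k - (a * l k) * h'
  have hmem : σ k ∈ ({k, k} : Finset (Fin 5)) := by
    rw [← hl.pair_eq_of_mul_eq hσk hk'0 hk hk hmul]; simp
  simpa using hmem

theorem eq_smul_of_isometry (hl : Admissible l) (T : (ℂ × ℂ) ≃ₗ[ℝ] ℂ × ℂ)
    (hT : ∀ p, supNorm l (T p) = supNorm l p) : ∃ a : ℂ, ‖a‖ = 1 ∧ ∀ p, T p = a • p := by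
  obtain ⟨σ, hσ, g, hg⟩ := hl.exists_form_comp T hT
  have hrel : ∀ k, l (σ k) * (T (0, 1)).2 = (T (0, 1)).1 + g (l k) := fun k => by
    have := hg k (0, 1)
    simp only [form_apply, mul_one, zero_sub, map_neg] at this
    linear_combination -this
  have hσ0 := hl.map_zero_eq_zero hσ g hrel
  have hβ : (T (0, 1)).1 = 0 := by simpa [hσ0, hl.zero] using (hrel 0).symm
  obtain ⟨a, hga | hga⟩ := linear_isometry_complex (g.toLinearIsometryEquiv rfl)
  · have hg' : ∀ z, g z = a * z := fun z => by
      simpa using LinearIsometryEquiv.congr_fun hga z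
    have hσ1 := hl.eq_self_of_mul hσ hσ0 a.coe_ne_zero
      (fun k => by rw [hrel, hβ, zero_add, hg']) 1
    refine ⟨a, a.norm_coe, fun p => eq_of_form_eq (hl.injective.ne zero_ne_one) ?_ ?_⟩
    · rw [← hσ0, hg, hσ0, hg', map_smul, smul_eq_mul]
    · rw [← hσ1, hg, hσ1, hg', map_smul, smul_eq_mul]
  · have hg' : ∀ z, g z = a * conj z := fun z => by
      simpa using LinearIsometryEquiv.congr_fun hga z
    exact (hl.false_of_mul_conj hσ.1 hσ0 a.coe_ne_zero
      (fun k => by rw [hrel, hβ, zero_add, hg'])).elim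

end Admissible

/-- `{1, 2, 4, 8}` is a Sidon set: its pairwise sums are distinct. -/
def sidon : Fin 5 → ℕ := ![0, 1, 2, 4, 8]

noncomputable def lam (k : Fin 5) : ℂ := if k = 0 then 0 else Circle.exp (sidon k / 100)

lemma lam_of_ne_zero {k : Fin 5} (hk : k ≠ 0) : lam k = Circle.exp (sidon k / 100) := if_neg hk

lemma sidon_le (k : Fin 5) : sidon k ≤ 8 := by fin_cases k <;> decide

lemma admissible_lam : Admissible lam where
  zero := if_pos rfl
  norm_eq_one k hk := by rw [lam_of_ne_zero hk, Circle.norm_coe]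
  norm_sub_one_lt k hk := by
    have h8 : (sidon k : ℝ) ≤ 8 := by exact_mod_cast sidon_le k
    rw [lam_of_ne_zero hk, Circle.coe_exp, mul_comm]
    refine Real.norm_exp_I_mul_ofReal_sub_one_le.trans_lt ?_
    rw [Real.norm_of_nonneg (by positivity)]
    linarith
  mul_ne_mul j k m n hj hk hm hn hne h := by
    have hsidon : ∀ j k m n : Fin 5, j ≠ 0 → k ≠ 0 → m ≠ 0 → n ≠ 0 →
        ({j, k} : Finset (Fin 5)) ≠ {m, n} → sidon j + sidon k ≠ sidon m + sidon n := by
      decide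
    refine hsidon j k m n hj hk hm hn hne ?_
    simp only [lam_of_ne_zero, hj, hk, hm, hn, ne_eq, not_false_eq_true, ← Circle.coe_mul,
      ← Circle.exp_add, Circle.coe_inj] at h
    have hmem : ∀ j k : Fin 5, (sidon j / 100 + sidon k / 100 : ℝ) ∈ Set.Icc 0 (16 / 100) :=
      fun j k => by
        have := sidon_le j; have := sidon_le k
        constructor
        · positivity
        · have : (sidon j : ℝ) + sidon k ≤ 16 := by
            exact_mod_cast (by omega : sidon j + sidon k ≤ 16)
          linarith
    have := Circle.exp_injOn_Icc (by linarith [Real.pi_gt_three]) (hmem j k) (hmem m n) h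
    exact_mod_cast (by linarith : (sidon j + sidon k : ℝ) = sidon m + sidon n)

end SupNormC2

/-- there is a complex norm on `ℂ²`, namely
`‖(x,y)‖ = max_{0 ≤ k ≤ 4} |x - λ_k y|` where `λ₀ = 0` and `λ₁, …, λ₄` are
unimodular with positive real parts and pairwise distinct products
`λ_j λ_k` (for distinct pairs `{j,k}`), for which every surjective `ℝ`-linear
isometry of `ℂ²` is trivial, i.e. of the form `(x,y) ↦ (μx, μy)` for some
`μ ∈ ℂ` with `|μ| = 1`. -/
theorem stmt_17 :
    ∃ (l : Fin 5 → ℂ) (N : ℂ × ℂ → ℝ),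
      l 0 = 0 ∧
      (∀ k : Fin 5, k ≠ 0 → ‖l k‖ = 1) ∧
      (∀ k : Fin 5, k ≠ 0 → 0 < (l k).re) ∧
      (∀ j k m n : Fin 5, j ≠ 0 → k ≠ 0 → m ≠ 0 → n ≠ 0 →
        ({j, k} : Finset (Fin 5)) ≠ {m, n} → l j * l k ≠ l m * l n) ∧
      (∀ p : ℂ × ℂ, N p = ⨆ k : Fin 5, ‖p.1 - l k * p.2‖) ∧
      (∀ (c : ℂ) (p : ℂ × ℂ), N (c • p) = ‖c‖ * N p) ∧
      (∀ p q : ℂ × ℂ, N (p + q) ≤ N p + N q) ∧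
      (∀ p : ℂ × ℂ, N p = 0 → p = 0) ∧
      (∀ T : (ℂ × ℂ) ≃ₗ[ℝ] (ℂ × ℂ), (∀ p, N (T p) = N p) →
        ∃ μ : ℂ, ‖μ‖ = 1 ∧ ∀ p : ℂ × ℂ, T p = μ • p) := by
  refine ⟨SupNormC2.lam, SupNormC2.supNorm SupNormC2.lam, SupNormC2.admissible_lam.zero,
    SupNormC2.admissible_lam.norm_eq_one, fun k hk => SupNormC2.admissible_lam.re_pos hk,
    SupNormC2.admissible_lam.mul_ne_mul, fun p => rfl, SupNormC2.supNorm_smul _,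
    SupNormC2.supNorm_add_le _, fun p => SupNormC2.eq_zero_of_supNorm_eq_zero
      (SupNormC2.admissible_lam.injective.ne zero_ne_one),
    SupNormC2.admissible_lam.eq_smul_of_isometry⟩
end
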